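/- Let 0 < η < 1 and n ≥ 0. Then there exists a real constant M(η, n), depending only on η and n, with the following property: for every H > 0, setting h = √3·H/2, for every x' ∈ ℝ³ with |x'| ≤ h, and for every (s₀, θ₀, φ₀) with s₀ > 0 such that x₀ = x(s₀, θ₀, φ₀) satisfies |x'| ≤ η·|x₀|, the Laplace analytic factor g^Δ(s, θ, φ) := |x(s, θ, φ)| / |x(s, θ, φ) − x'| satisfies |∂^n g^Δ/∂ξ^n (s₀, θ₀, φ₀)| ≤ M(η, n) for each of ξ = s, ξ = θ, and ξ = φ; in particular the bound is independent of the box size H. -/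

import Mathlib

/-!
Write `x = r • u` with `‖u‖ = 1` and `r = h / s`. The factor is unchanged when `x` and `x'` are
scaled together, so in `θ` or `φ` it equals `‖u - w‖⁻¹` with `w = x' / r`, `‖w‖ ≤ η`, and in `s`
it equals `‖u - s • c‖⁻¹` with `c = x' / h`, `‖c‖ ≤ 1`, `s₀ ‖c‖ ≤ η`. In both cases it is
`q ^ (-1/2)`, where `q` is a trigonometric polynomial in the angle, resp. a quadratic polynomial
in `s`, with derivatives bounded by constants free of `H`, and `q ≥ ((1 - η) / 2)²` near the
point. Faà di Bruno's bound for the composition with `y ↦ y ^ (-1/2)` then gives `M(η, n)`.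
-/

set_option autoImplicit false

noncomputable section

/-- The spherical parametrization `x̃(r, θ, φ)` of `ℝ³`. -/
noncomputable def sph (r θ φ : ℝ) : EuclideanSpace ℝ (Fin 3) :=
  WithLp.toLp 2 ![r * Real.sin θ * Real.cos φ, r * Real.sin θ * Real.sin φ, r * Real.cos θ]

open Real Set Filter Topology
open scoped InnerProductSpace

theorem iteratedDeriv_rpow_const_of_pos (p : ℝ) (i : ℕ) {y : ℝ} (hy : 0 < y) :
    iteratedDeriv i (fun x : ℝ => x ^ p) y = (∏ j ∈ Finset.range i, (p - j)) * y ^ (p - i) := by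
  induction i generalizing y with
  | zero => simp
  | succ i ih =>
    have hev : iteratedDeriv i (fun x : ℝ => x ^ p)
        =ᶠ[𝓝 y] fun x => (∏ j ∈ Finset.range i, (p - j)) * x ^ (p - i) :=
      eventually_of_mem (Ioi_mem_nhds hy) fun x hx => ih hx
    rw [iteratedDeriv_succ, hev.deriv_eq,
      deriv_const_mul _ (differentiableAt_rpow_const_of_ne _ hy.ne'),
      deriv_rpow_const y, Finset.prod_range_succ]
    push_cast
    ring_nf

theorem abs_prod_range_neg_half_sub_le (i : ℕ) :
    |∏ j ∈ Finset.range i, (-(1 / 2) - (j : ℝ))| ≤ i.factorial := by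
  rw [Finset.abs_prod, ← Finset.prod_range_add_one_eq_factorial, Nat.cast_prod]
  refine Finset.prod_le_prod (fun _ _ => abs_nonneg _) fun j _ => ?_
  rw [abs_of_neg (by linarith [(Nat.cast_nonneg j : (0:ℝ) ≤ j)])]
  push_cast
  linarith

-- `min δ 1 ≤ 1` makes `i ↦ min δ 1 ^ (-1/2 - i)` increasing, so the order `i = n` dominates.
def invSqrtDerivBound (δ : ℝ) (n : ℕ) : ℝ := n.factorial * min δ 1 ^ (-(1 / 2) - n : ℝ)

theorem abs_iteratedDeriv_rpow_neg_half_le {δ y : ℝ} {i n : ℕ} (hδ : 0 < δ) (hy : δ ≤ y)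
    (hi : i ≤ n) :
    |iteratedDeriv i (fun x : ℝ => x ^ (-(1 / 2) : ℝ)) y| ≤ invSqrtDerivBound δ n := by
  have hδ' : 0 < min δ 1 := lt_min hδ one_pos
  have hy' : min δ 1 ≤ y := (min_le_left _ _).trans hy
  have hy0 : 0 < y := hδ'.trans_le hy'
  have hin : (i : ℝ) ≤ n := by exact_mod_cast hi
  rw [iteratedDeriv_rpow_const_of_pos _ _ hy0, abs_mul,
    abs_of_pos (rpow_pos_of_pos hy0 _), invSqrtDerivBound]
  refine mul_le_mul ((abs_prod_range_neg_half_sub_le i).trans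
    (by exact_mod_cast Nat.factorial_le hi)) ?_ (rpow_pos_of_pos hy0 _).le (by positivity)
  calc y ^ (-(1 / 2) - i : ℝ) ≤ min δ 1 ^ (-(1 / 2) - i : ℝ) :=
        rpow_le_rpow_of_nonpos hδ' hy' (by linarith [(Nat.cast_nonneg i : (0:ℝ) ≤ i)])
    _ ≤ min δ 1 ^ (-(1 / 2) - n : ℝ) :=
        rpow_le_rpow_of_exponent_ge hδ' (min_le_right _ _) (by linarith)

theorem abs_iteratedDeriv_rpow_neg_half_comp_le {q : ℝ → ℝ} {U : Set ℝ} {t₀ δ D : ℝ} {n : ℕ}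
    (hU : IsOpen U) (ht₀ : t₀ ∈ U) (hq : ContDiffOn ℝ n q U) (hδ : 0 < δ)
    (hqδ : ∀ t ∈ U, δ ≤ q t) (hD : ∀ i, 1 ≤ i → i ≤ n → |iteratedDeriv i q t₀| ≤ D ^ i) :
    |iteratedDeriv n (fun t => q t ^ (-(1 / 2) : ℝ)) t₀| ≤
      n.factorial * invSqrtDerivBound δ n * D ^ n := by
  have hqt₀ : q t₀ ∈ Ioi 0 := hδ.trans_le (hqδ t₀ ht₀)
  have hderiv_within {f : ℝ → ℝ} {V : Set ℝ} {x : ℝ} (hV : IsOpen V) (hx : x ∈ V) (i : ℕ) :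
      ‖iteratedFDerivWithin ℝ i f V x‖ = |iteratedDeriv i f x| := by
    rw [iteratedFDerivWithin_of_isOpen i hV hx, norm_iteratedFDeriv_eq_norm_iteratedDeriv,
      norm_eq_abs]
  rw [← hderiv_within hU ht₀]
  refine norm_iteratedFDerivWithin_comp_le (g := fun y : ℝ => y ^ (-(1 / 2) : ℝ)) (t := Ioi 0)
    (fun y hy => (contDiffAt_rpow_const_of_ne (ne_of_gt hy)).contDiffWithinAt) hq le_rfl
    isOpen_Ioi.uniqueDiffOn hU.uniqueDiffOn (fun t ht => hδ.trans_le (hqδ t ht)) ht₀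
    (fun i hi => ?_) (fun i hi₁ hin => (hderiv_within hU ht₀ i).trans_le (hD i hi₁ hin))
  rw [hderiv_within isOpen_Ioi hqt₀]
  exact abs_iteratedDeriv_rpow_neg_half_le hδ (hqδ t₀ ht₀) hi

theorem abs_iteratedDeriv_sin_add_cos_le (n : ℕ) (a b t : ℝ) :
    |iteratedDeriv n (fun t => a * sin t + b * cos t) t| ≤ |a| + |b| := by
  induction n generalizing a b with
  | zero =>
    calc |a * sin t + b * cos t| ≤ |a| * |sin t| + |b| * |cos t| := by
          simpa only [abs_mul] using abs_add_le (a * sin t) (b * cos t)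
      _ ≤ |a| * 1 + |b| * 1 := by gcongr <;> [exact abs_sin_le_one t; exact abs_cos_le_one t]
      _ = |a| + |b| := by ring
  | succ n ih =>
    have hderiv : deriv (fun t => a * sin t + b * cos t) = fun t => -b * sin t + a * cos t := by
      funext t
      exact (((hasDerivAt_sin t).const_mul a).add ((hasDerivAt_cos t).const_mul b)).deriv.trans
        (by ring)
    rw [iteratedDeriv_succ', hderiv]
    simpa only [abs_neg, add_comm] using ih (-b) a

theorem abs_iteratedDeriv_quadratic_le {a b c x D : ℝ} (hD : 0 ≤ D) (h₁ : |b + 2 * c * x| ≤ D)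
    (h₂ : |2 * c| ≤ D ^ 2) {i : ℕ} (hi : 1 ≤ i) :
    |iteratedDeriv i (fun x => a + b * x + c * x ^ 2) x| ≤ D ^ i := by
  have hderiv : deriv (fun x => a + b * x + c * x ^ 2) = fun x => b + 2 * c * x := by
    funext x
    exact ((((hasDerivAt_id x).const_mul b).const_add a).add
      ((hasDerivAt_pow 2 x).const_mul c)).deriv.trans
      (by simp only [mul_one, Nat.cast_ofNat, Nat.add_one_sub_one, pow_one]; ring)
  have hderiv₂ : deriv (fun x => b + 2 * c * x) = fun _ => 2 * c := by
    funext x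
    exact (((hasDerivAt_id x).const_mul (2 * c)).const_add b).deriv.trans (by simp)
  obtain _ | _ | _ | i := i
  · omega
  · simpa [hderiv] using h₁
  · simpa [iteratedDeriv_succ', hderiv, hderiv₂] using h₂
  · rw [iteratedDeriv_succ', iteratedDeriv_succ', hderiv, hderiv₂, iteratedDeriv_const,
      if_neg (by omega), abs_zero]
    positivity

/-- `M(η, n)`: Faà di Bruno's bound `n! · C · Dⁿ` for `q ^ (-1/2)` with `q ≥ ((1 - η) / 2)²`
and `D = 6`. -/
def laplaceFactorBound (η : ℝ) (n : ℕ) : ℝ :=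
  n.factorial * invSqrtDerivBound (((1 - η) / 2) ^ 2) n * 6 ^ n

theorem abs_iteratedDeriv_inv_norm_le {E : Type*} [SeminormedAddCommGroup E] {v : ℝ → E}
    {q : ℝ → ℝ} {U : Set ℝ} {t₀ η : ℝ} {n : ℕ} (hη : η < 1) (hU : IsOpen U) (ht₀ : t₀ ∈ U)
    (hq : ContDiff ℝ n q) (hqv : ∀ t ∈ U, ‖v t‖ ^ 2 = q t) (hv : ∀ t ∈ U, (1 - η) / 2 ≤ ‖v t‖)
    (hD : ∀ i, 1 ≤ i → i ≤ n → |iteratedDeriv i q t₀| ≤ 6 ^ i) :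
    |iteratedDeriv n (fun t => ‖v t‖⁻¹) t₀| ≤ laplaceFactorBound η n := by
  have hρ : 0 < (1 - η) / 2 := by linarith
  have hev : (fun t => ‖v t‖⁻¹) =ᶠ[𝓝 t₀] fun t => q t ^ (-(1 / 2) : ℝ) :=
    eventually_of_mem (hU.mem_nhds ht₀) fun t ht => by
      show ‖v t‖⁻¹ = q t ^ _
      rw [← hqv t ht, rpow_neg (sq_nonneg _), ← sqrt_eq_rpow, sqrt_sq (norm_nonneg _)]
  rw [hev.iteratedDeriv_eq]
  exact abs_iteratedDeriv_rpow_neg_half_comp_le hU ht₀ hq.contDiffOn (by positivity)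
    (fun t ht => hqv t ht ▸ pow_le_pow_left₀ hρ.le (hv t ht) 2) hD

section InnerProductSpace

variable {E : Type*} [NormedAddCommGroup E] [InnerProductSpace ℝ E]

theorem abs_iteratedDeriv_inv_norm_sub_le_of_inner_eq {u : ℝ → E} {w : E} {a b c η : ℝ}
    (n : ℕ) (t₀ : ℝ) (hη : η < 1) (hu : ∀ t, ‖u t‖ = 1) (hw : ‖w‖ ≤ η) (hab : |a| + |b| ≤ 3)
    (huw : ∀ t, ⟪u t, w⟫_ℝ = a * sin t + b * cos t + c) :
    |iteratedDeriv n (fun t => ‖u t - w‖⁻¹) t₀| ≤ laplaceFactorBound η n := by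
  refine abs_iteratedDeriv_inv_norm_le (q := fun t => (1 - 2 * c + ‖w‖ ^ 2) +
    (-2 * a * sin t + -2 * b * cos t)) hη isOpen_univ (mem_univ t₀) (by fun_prop)
    (fun t _ => ?_) (fun t _ => ?_) (fun i hi _ => ?_)
  · rw [norm_sub_sq_real, hu, huw]
    ring
  · linarith [norm_sub_norm_le (u t) w, hu t]
  · rw [iteratedDeriv_const_add hi]
    calc _ ≤ |-2 * a| + |-2 * b| := abs_iteratedDeriv_sin_add_cos_le i _ _ t₀
      _ ≤ 6 := by simp only [abs_mul, abs_neg, abs_two]; linarith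
      _ ≤ 6 ^ i := le_self_pow₀ (by norm_num) (by omega)

theorem abs_iteratedDeriv_inv_norm_sub_smul_le {u c : E} {s₀ η : ℝ} (n : ℕ) (hη : η < 1)
    (hu : ‖u‖ = 1) (hc : ‖c‖ ≤ 1) (hs₀ : 0 < s₀) (hcs₀ : s₀ * ‖c‖ ≤ η) :
    |iteratedDeriv n (fun s => ‖u - s • c‖⁻¹) s₀| ≤ laplaceFactorBound η n := by
  have hc₀ := norm_nonneg c
  have huc : |⟪u, c⟫_ℝ| ≤ ‖c‖ := by simpa [hu] using abs_real_inner_le_norm u c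
  refine abs_iteratedDeriv_inv_norm_le (U := Ioo 0 (s₀ + (1 - η) / 2))
    (q := fun s => 1 + -2 * ⟪u, c⟫_ℝ * s + ‖c‖ ^ 2 * s ^ 2) hη isOpen_Ioo
    ⟨hs₀, by linarith⟩ (by fun_prop) (fun s _ => ?_) (fun s hs => ?_) (fun i hi _ => ?_)
  · rw [norm_sub_sq_real, hu, real_inner_smul_right, norm_smul, norm_eq_abs]
    ring_nf
    rw [sq_abs]
  · have hsc : s * ‖c‖ ≤ η + (1 - η) / 2 := by nlinarith [hs.1, hs.2]
    have := norm_sub_norm_le u (s • c)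
    rw [norm_smul, norm_eq_abs, abs_of_pos hs.1, hu] at this
    linarith
  · refine abs_iteratedDeriv_quadratic_le (by norm_num) ?_ ?_ hi
    · calc |-2 * ⟪u, c⟫_ℝ + 2 * ‖c‖ ^ 2 * s₀| ≤ 2 * |⟪u, c⟫_ℝ| + 2 * (‖c‖ * (s₀ * ‖c‖)) := by
            refine (abs_add_le _ _).trans_eq ?_
            rw [abs_of_nonneg (by positivity : 0 ≤ 2 * ‖c‖ ^ 2 * s₀), abs_mul, abs_neg, abs_two]
            ring
        _ ≤ 6 := by nlinarith
    · rw [abs_of_nonneg (by positivity)]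
      nlinarith

end InnerProductSpace

theorem norm_smul_div_norm_smul_sub_smul {E : Type*} [NormedAddCommGroup E] [NormedSpace ℝ E]
    {r : ℝ} (hr : r ≠ 0) (u w : E) : ‖r • u‖ / ‖r • u - r • w‖ = ‖u‖ / ‖u - w‖ := by
  rw [← smul_sub, norm_smul, norm_smul, mul_div_mul_left _ _ (norm_ne_zero_iff.mpr hr)]

theorem exists_eq_smul_norm_le {E : Type*} [NormedAddCommGroup E] [NormedSpace ℝ E] {r η : ℝ}
    {x : E} (hr : r ≠ 0) (hx : ‖x‖ ≤ η * |r|) : ∃ w : E, x = r • w ∧ ‖w‖ ≤ η := by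
  refine ⟨r⁻¹ • x, (smul_inv_smul₀ hr x).symm, ?_⟩
  rw [norm_smul, norm_inv, norm_eq_abs, inv_mul_le_iff₀ (abs_pos.mpr hr), mul_comm]
  exact hx

theorem sph_eq_smul (r θ φ : ℝ) : sph r θ φ = r • sph 1 θ φ := by
  ext i
  fin_cases i <;>
    simp only [sph, Fin.isValue, Fin.zero_eta, Fin.mk_one, Fin.reduceFinMk, Matrix.cons_val_zero,
      Matrix.cons_val_one, Matrix.cons_val, one_mul, PiLp.smul_apply, smul_eq_mul] <;> ring

theorem inner_sph_one (θ φ : ℝ) (w : EuclideanSpace ℝ (Fin 3)) :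
    ⟪sph 1 θ φ, w⟫_ℝ = sin θ * cos φ * w 0 + sin θ * sin φ * w 1 + cos θ * w 2 := by
  simp only [sph, one_mul, PiLp.inner_apply, RCLike.inner_apply, ringHom_apply,
    Fin.sum_univ_three, Fin.isValue, Matrix.cons_val_zero, Matrix.cons_val_one, Matrix.cons_val]
  ring

theorem norm_sph_one (θ φ : ℝ) : ‖sph 1 θ φ‖ = 1 := by
  rw [EuclideanSpace.norm_eq, Fin.sum_univ_three, sqrt_eq_one]
  simp only [sph, one_mul, norm_eq_abs, sq_abs, PiLp.toLp_apply, Fin.isValue,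
    Matrix.cons_val_zero, Matrix.cons_val_one, Matrix.cons_val]
  linear_combination sin θ ^ 2 * sin_sq_add_cos_sq φ + sin_sq_add_cos_sq θ

theorem norm_sph (r θ φ : ℝ) : ‖sph r θ φ‖ = |r| := by
  rw [sph_eq_smul, norm_smul, norm_sph_one, norm_eq_abs, mul_one]

theorem abs_apply_le_one_of_norm_le_one {w : EuclideanSpace ℝ (Fin 3)} (hw : ‖w‖ ≤ 1)
    (i : Fin 3) : |w i| ≤ 1 :=
  (PiLp.norm_apply_le w i).trans hw

theorem abs_iteratedDeriv_polar_le {r η : ℝ} {x' : EuclideanSpace ℝ (Fin 3)} (n : ℕ)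
    (θ₀ φ : ℝ) (hr : r ≠ 0) (hη : η < 1) (hx' : ‖x'‖ ≤ η * |r|) :
    |iteratedDeriv n (fun θ => ‖sph r θ φ‖ / ‖sph r θ φ - x'‖) θ₀| ≤ laplaceFactorBound η n := by
  obtain ⟨w, rfl, hw⟩ := exists_eq_smul_norm_le hr hx'
  simp only [sph_eq_smul r, norm_smul_div_norm_smul_sub_smul hr, norm_sph_one, one_div]
  refine abs_iteratedDeriv_inv_norm_sub_le_of_inner_eq (a := cos φ * w 0 + sin φ * w 1)
    (b := w 2) (c := 0) n θ₀ hη (norm_sph_one · φ) hw ?_ fun θ => by rw [inner_sph_one]; ring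
  have hw' := abs_apply_le_one_of_norm_le_one (hw.trans hη.le)
  have h₀ : |cos φ * w 0| ≤ 1 := by
    rw [abs_mul]; exact mul_le_one₀ (abs_cos_le_one φ) (abs_nonneg _) (hw' 0)
  have h₁ : |sin φ * w 1| ≤ 1 := by
    rw [abs_mul]; exact mul_le_one₀ (abs_sin_le_one φ) (abs_nonneg _) (hw' 1)
  linarith [abs_add_le (cos φ * w 0) (sin φ * w 1), hw' 2]

theorem abs_iteratedDeriv_azimuthal_le {r η : ℝ} {x' : EuclideanSpace ℝ (Fin 3)} (n : ℕ)
    (θ φ₀ : ℝ) (hr : r ≠ 0) (hη : η < 1) (hx' : ‖x'‖ ≤ η * |r|) :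
    |iteratedDeriv n (fun φ => ‖sph r θ φ‖ / ‖sph r θ φ - x'‖) φ₀| ≤ laplaceFactorBound η n := by
  obtain ⟨w, rfl, hw⟩ := exists_eq_smul_norm_le hr hx'
  simp only [sph_eq_smul r, norm_smul_div_norm_smul_sub_smul hr, norm_sph_one, one_div]
  refine abs_iteratedDeriv_inv_norm_sub_le_of_inner_eq (a := sin θ * w 1) (b := sin θ * w 0)
    (c := cos θ * w 2) n φ₀ hη (norm_sph_one θ) hw ?_ fun φ => by rw [inner_sph_one]; ring
  have hw' := abs_apply_le_one_of_norm_le_one (hw.trans hη.le)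
  have h₀ : |sin θ * w 0| ≤ 1 := by
    rw [abs_mul]; exact mul_le_one₀ (abs_sin_le_one θ) (abs_nonneg _) (hw' 0)
  have h₁ : |sin θ * w 1| ≤ 1 := by
    rw [abs_mul]; exact mul_le_one₀ (abs_sin_le_one θ) (abs_nonneg _) (hw' 1)
  linarith

theorem abs_iteratedDeriv_radial_le {h η s₀ : ℝ} {x' : EuclideanSpace ℝ (Fin 3)} (n : ℕ)
    (θ φ : ℝ) (hh : 0 < h) (hη : η < 1) (hs₀ : 0 < s₀) (hx'h : ‖x'‖ ≤ h)
    (hx' : ‖x'‖ ≤ η * (h / s₀)) :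
    |iteratedDeriv n (fun s => ‖sph (h / s) θ φ‖ / ‖sph (h / s) θ φ - x'‖) s₀| ≤
      laplaceFactorBound η n := by
  obtain ⟨c, rfl, hc⟩ := exists_eq_smul_norm_le (η := 1) hh.ne' (by rwa [one_mul, abs_of_pos hh])
  have hcs₀ : s₀ * ‖c‖ ≤ η := by
    rw [norm_smul, norm_eq_abs, abs_of_pos hh, mul_div_assoc', le_div_iff₀ hs₀] at hx'
    refine le_of_mul_le_mul_left ?_ hh
    linarith
  have hev : (fun s => ‖sph (h / s) θ φ‖ / ‖sph (h / s) θ φ - h • c‖) =ᶠ[𝓝 s₀]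
      fun s => ‖sph 1 θ φ - s • c‖⁻¹ :=
    eventually_of_mem (Ioi_mem_nhds hs₀) fun s hs => by
      have hs₀' : s ≠ 0 := (mem_Ioi.mp hs).ne'
      dsimp only
      rw [sph_eq_smul (h / s),
        show h • c = (h / s) • s • c by rw [smul_smul, div_mul_cancel₀ _ hs₀'],
        norm_smul_div_norm_smul_sub_smul (div_ne_zero hh.ne' hs₀'), norm_sph_one, one_div]
  rw [hev.iteratedDeriv_eq]
  exact abs_iteratedDeriv_inv_norm_sub_smul_le n hη (norm_sph_one θ φ) hc hs₀ hcs₀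

theorem laplace_factor_derivative_bound_general (η : ℝ) (hη1 : η < 1) (n : ℕ) :
    ∃ M : ℝ, ∀ H : ℝ, 0 < H →
      ∀ x' : EuclideanSpace ℝ (Fin 3), ‖x'‖ ≤ Real.sqrt 3 * H / 2 →
      ∀ s₀ θ₀ φ₀ : ℝ, 0 < s₀ →
        ‖x'‖ ≤ η * ‖sph (Real.sqrt 3 * H / 2 / s₀) θ₀ φ₀‖ →
        |iteratedDeriv n
            (fun s => ‖sph (Real.sqrt 3 * H / 2 / s) θ₀ φ₀‖ /
              ‖sph (Real.sqrt 3 * H / 2 / s) θ₀ φ₀ - x'‖) s₀| ≤ M ∧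
        |iteratedDeriv n
            (fun θ => ‖sph (Real.sqrt 3 * H / 2 / s₀) θ φ₀‖ /
              ‖sph (Real.sqrt 3 * H / 2 / s₀) θ φ₀ - x'‖) θ₀| ≤ M ∧
        |iteratedDeriv n
            (fun φ => ‖sph (Real.sqrt 3 * H / 2 / s₀) θ₀ φ‖ /
              ‖sph (Real.sqrt 3 * H / 2 / s₀) θ₀ φ - x'‖) φ₀| ≤ M := by
  refine ⟨laplaceFactorBound η n, fun H hH x' hx'h s₀ θ₀ φ₀ hs₀ hx' => ?_⟩
  have hh : 0 < √3 * H / 2 := by positivity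
  have hr : 0 < √3 * H / 2 / s₀ := div_pos hh hs₀
  rw [norm_sph] at hx'
  refine ⟨abs_iteratedDeriv_radial_le n θ₀ φ₀ hh hη1 hs₀ hx'h (abs_of_pos hr ▸ hx'),
    abs_iteratedDeriv_polar_le n θ₀ φ₀ hr.ne' hη1 hx',
    abs_iteratedDeriv_azimuthal_le n θ₀ φ₀ hr.ne' hη1 hx'⟩

/-- Laplace case: with `h = √3·H/2` and `x(s, θ, φ) = x̃(h/s, θ, φ)`,
the Laplace analytic factor `g^Δ(s,θ,φ) = ‖x(s,θ,φ)‖ / ‖x(s,θ,φ) − x'‖` has all its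
`n`-th partial derivatives in each of `s`, `θ`, `φ` bounded by a constant `M(η,n)`
depending only on `η` and `n` — in particular independent of the box size `H`. -/
theorem laplace_factor_derivative_bound (η : ℝ) (hη0 : 0 < η) (hη1 : η < 1) (n : ℕ) :
    ∃ M : ℝ, ∀ H : ℝ, 0 < H →
      ∀ x' : EuclideanSpace ℝ (Fin 3), ‖x'‖ ≤ Real.sqrt 3 * H / 2 →
      ∀ s₀ θ₀ φ₀ : ℝ, 0 < s₀ →
        ‖x'‖ ≤ η * ‖sph (Real.sqrt 3 * H / 2 / s₀) θ₀ φ₀‖ →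
        |iteratedDeriv n
            (fun s => ‖sph (Real.sqrt 3 * H / 2 / s) θ₀ φ₀‖ /
              ‖sph (Real.sqrt 3 * H / 2 / s) θ₀ φ₀ - x'‖) s₀| ≤ M ∧
        |iteratedDeriv n
            (fun θ => ‖sph (Real.sqrt 3 * H / 2 / s₀) θ φ₀‖ /
              ‖sph (Real.sqrt 3 * H / 2 / s₀) θ φ₀ - x'‖) θ₀| ≤ M ∧
        |iteratedDeriv n
            (fun φ => ‖sph (Real.sqrt 3 * H / 2 / s₀) θ₀ φ‖ /
              ‖sph (Real.sqrt 3 * H / 2 / s₀) θ₀ φ - x'‖) φ₀| ≤ M :=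
  laplace_factor_derivative_bound_general η hη1 n
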